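/- Let ρ^TF be the minimizer of the two-dimensional Thomas–Fermi functional with chemical potential μ. If Ω ≤ 4/(√π ε) then μ = 2/(π ε²) − Ω²/8 ≥ 0 and ρ^TF(x) > 0 for almost every x ∈ D; if Ω > 4/(√π ε) then μ < 0 and ρ^TF vanishes identically on the open disc of radius 2√(−μ)/Ω centered at the origin (the density develops a 'hole'). -/

import Mathlib

open MeasureTheory Filter Topology

noncomputable section

/-- The plane `ℝ²`. -/
abbrev E2 := EuclideanSpace ℝ (Fin 2)

/-- The closed unit disc `D ⊂ ℝ²`. -/
def unitDisc : Set E2 := Metric.closedBall 0 1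

/-- The integrand of the 2D Thomas–Fermi functional: `−(Ω²/4)|x|²ρ + ε⁻²ρ²`. -/
def tfIntegrand2 (ε Ω : ℝ) (ρ : E2 → ℝ) (x : E2) : ℝ :=
  -(Ω ^ 2 / 4) * ‖x‖ ^ 2 * ρ x + (1 / ε ^ 2) * ρ x ^ 2

/-- Admissible densities for the 2D Thomas–Fermi problem. -/
def tfAdmissible2 (ρ : E2 → ℝ) : Prop :=
  Measurable ρ ∧ (∀ x, 0 ≤ ρ x) ∧ IntegrableOn ρ unitDisc ∧
    IntegrableOn (fun x => ρ x ^ 2) unitDisc ∧ (∫ x in unitDisc, ρ x) = 1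

/-- The 2D Thomas–Fermi energy `E^TF(ε,Ω)`. -/
def ETF2 (ε Ω : ℝ) : ℝ :=
  sInf { e | ∃ ρ : E2 → ℝ, tfAdmissible2 ρ ∧ e = ∫ x in unitDisc, tfIntegrand2 ε Ω ρ x }

/-- The candidate Thomas–Fermi minimizer with chemical potential `μ`:
`ρ^TF(x) = (ε²/2) [μ + (Ω²/4)|x|²]₊`. -/
def rhoTF2 (ε Ω μ : ℝ) (x : E2) : ℝ :=
  ε ^ 2 / 2 * max (μ + Ω ^ 2 / 4 * ‖x‖ ^ 2) 0

/-! Since `∫_D |x|² = π/2` and `|D| = π`, for `μ ≥ 0` the profile is the whole parabola and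
`∫ ρ^TF = (π ε²/2)(μ + Ω²/8)`, which pins down `μ`. The mass `μ ↦ ∫ ρ_μ` is nondecreasing and strictly
increasing wherever it is positive, so the normalised `μ` is nonnegative exactly when the profile
with `μ = 0` carries mass at most one, i.e. when `Ω ≤ 4/(√π ε)`. For `μ < 0` the positive part
cuts off the disc `(Ω²/4)|x|² < −μ`. -/

open Metric Set Real

theorem integral_lt_integral_of_lt_on_support {α : Type*} [MeasurableSpace α] {μ : Measure α}
    {f g : α → ℝ} (hf : Integrable f μ) (hg : Integrable g μ) (hf0 : 0 ≤ f) (hfg : f ≤ g)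
    (hlt : ∀ x, 0 < f x → f x < g x) (hpos : 0 < ∫ x, f x ∂μ) :
    ∫ x, f x ∂μ < ∫ x, g x ∂μ := by
  rw [integral_pos_iff_support_of_nonneg hf0 hf] at hpos
  have hsupp : Function.support f ⊆ Function.support (g - f) := fun x hx =>
    (sub_pos.2 (hlt x ((hf0 x).lt_of_ne' hx))).ne'
  have hdiff : 0 < ∫ x, (g - f) x ∂μ :=
    (integral_pos_iff_support_of_nonneg (sub_nonneg.2 hfg) (hg.sub hf)).2
      (hpos.trans_le (measure_mono hsupp))
  rw [Pi.sub_def, integral_sub hg hf] at hdiff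
  linarith

section NormSq

variable {E : Type*} [NormedAddCommGroup E] [NormedSpace ℝ E] [FiniteDimensional ℝ E]
  [Nontrivial E] [MeasurableSpace E] [BorelSpace E] (μ : Measure E) [μ.IsAddHaarMeasure]

theorem setIntegral_closedBall_norm_sq {r : ℝ} (hr : 0 ≤ r) :
    ∫ x in closedBall (0 : E) r, ‖x‖ ^ 2 ∂μ =
      Module.finrank ℝ E / (Module.finrank ℝ E + 2) * μ.real (ball 0 1) *
        r ^ (Module.finrank ℝ E + 2) := by
  obtain ⟨d, hd⟩ : ∃ d, Module.finrank ℝ E = d + 1 :=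
    Nat.exists_eq_add_one_of_ne_zero Module.finrank_pos.ne'
  have hindicator : (closedBall (0 : E) r).indicator (fun x => ‖x‖ ^ 2) =
      fun x => (Iic r).indicator (· ^ 2) ‖x‖ := by
    ext x; simp [indicator]
  have hradial : ∫ y in Ioi (0 : ℝ), y ^ d • (Iic r).indicator (· ^ 2) y =
      r ^ (d + 3) / (d + 3) := by
    have hpow : ∀ y : ℝ, y ^ d • (Iic r).indicator (· ^ 2) y =
        (Iic r).indicator (· ^ (d + 2)) y := by
      intro y
      by_cases hy : y ≤ r <;> simp [hy, ← pow_add]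
    simp_rw [hpow]
    rw [setIntegral_indicator measurableSet_Iic, Ioi_inter_Iic,
      ← intervalIntegral.integral_of_le hr, integral_pow]
    push_cast
    ring
  rw [← integral_indicator measurableSet_closedBall, hindicator, integral_fun_norm_addHaar, hd,
    Nat.add_sub_cancel, hradial, nsmul_eq_mul, smul_eq_mul]
  push_cast
  field_simp
  ring

end NormSq

theorem volume_real_unitDisc : volume.real unitDisc = π := by
  simp [unitDisc, measureReal_def, pi_nonneg]

theorem setIntegral_unitDisc_norm_sq : ∫ x in unitDisc, ‖x‖ ^ 2 = π / 2 := by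
  rw [unitDisc, setIntegral_closedBall_norm_sq volume zero_le_one]
  simp [measureReal_def, pi_nonneg]
  ring

section RhoTF2

variable (ε Ω : ℝ)

theorem continuous_rhoTF2 (μ : ℝ) : Continuous (rhoTF2 ε Ω μ) := by
  unfold rhoTF2
  fun_prop

theorem integrableOn_rhoTF2 (μ : ℝ) : IntegrableOn (rhoTF2 ε Ω μ) unitDisc :=
  (continuous_rhoTF2 ε Ω μ).continuousOn.integrableOn_compact (isCompact_closedBall 0 1)

theorem rhoTF2_nonneg (μ : ℝ) (x : E2) : 0 ≤ rhoTF2 ε Ω μ x := by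
  unfold rhoTF2
  positivity

theorem rhoTF2_of_nonneg {μ : ℝ} (hμ : 0 ≤ μ) (x : E2) :
    rhoTF2 ε Ω μ x = ε ^ 2 / 2 * μ + ε ^ 2 * Ω ^ 2 / 8 * ‖x‖ ^ 2 := by
  rw [rhoTF2, max_eq_left (by positivity)]
  ring

theorem integral_rhoTF2_of_nonneg {μ : ℝ} (hμ : 0 ≤ μ) :
    ∫ x in unitDisc, rhoTF2 ε Ω μ x = π * ε ^ 2 / 2 * (μ + Ω ^ 2 / 8) := by
  have hnormSq : IntegrableOn (fun x : E2 => ‖x‖ ^ 2) unitDisc :=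
    (continuous_norm.pow 2).continuousOn.integrableOn_compact (isCompact_closedBall 0 1)
  have hconst : IntegrableOn (fun _ : E2 => ε ^ 2 / 2 * μ) unitDisc :=
    integrableOn_const (isCompact_closedBall 0 1).measure_ne_top
  simp_rw [rhoTF2_of_nonneg ε Ω hμ]
  rw [integral_add hconst (hnormSq.const_mul _),
    setIntegral_const, volume_real_unitDisc, integral_const_mul, setIntegral_unitDisc_norm_sq,
    smul_eq_mul]
  ring

theorem rhoTF2_mono {μ ν : ℝ} (h : μ ≤ ν) (x : E2) : rhoTF2 ε Ω μ x ≤ rhoTF2 ε Ω ν x := by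
  unfold rhoTF2
  gcongr

theorem rhoTF2_lt_of_pos {μ ν : ℝ} (h : μ < ν) {x : E2} (hx : 0 < rhoTF2 ε Ω μ x) :
    rhoTF2 ε Ω μ x < rhoTF2 ε Ω ν x := by
  unfold rhoTF2 at *
  have hε : 0 < ε ^ 2 / 2 := pos_of_mul_pos_left hx (le_max_right _ _)
  have hmax : 0 < μ + Ω ^ 2 / 4 * ‖x‖ ^ 2 := by
    by_contra! hle
    rw [max_eq_right hle, mul_zero] at hx
    exact hx.false
  rw [max_eq_left hmax.le, max_eq_left (by linarith)]
  gcongr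

theorem integral_rhoTF2_lt {μ ν : ℝ} (h : μ < ν) (hpos : 0 < ∫ x in unitDisc, rhoTF2 ε Ω μ x) :
    ∫ x in unitDisc, rhoTF2 ε Ω μ x < ∫ x in unitDisc, rhoTF2 ε Ω ν x :=
  integral_lt_integral_of_lt_on_support (integrableOn_rhoTF2 ε Ω μ) (integrableOn_rhoTF2 ε Ω ν)
    (rhoTF2_nonneg ε Ω μ) (rhoTF2_mono ε Ω h.le) (fun _ => rhoTF2_lt_of_pos ε Ω h) hpos

theorem rhoTF2_eq_zero_of_norm_lt {μ : ℝ} {x : E2} (hx : ‖x‖ < 2 * √(-μ) / Ω) :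
    rhoTF2 ε Ω μ x = 0 := by
  have hΩ : 0 < Ω := by
    by_contra! hΩ
    exact (norm_nonneg x).not_gt (hx.trans_le (div_nonpos_of_nonneg_of_nonpos (by positivity) hΩ))
  have hμ : 0 < -μ := by
    by_contra! hμ
    rw [sqrt_eq_zero'.2 hμ, mul_zero, zero_div] at hx
    exact (norm_nonneg x).not_gt hx
  have hsq : (‖x‖ * Ω) ^ 2 < (2 * √(-μ)) ^ 2 :=
    pow_lt_pow_left₀ ((lt_div_iff₀ hΩ).1 hx) (by positivity) two_ne_zero
  rw [mul_pow, mul_pow, sq_sqrt hμ.le] at hsq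
  rw [rhoTF2, max_eq_right (by nlinarith), mul_zero]

theorem rhoTF2_pos_of_mem_unitDisc {μ : ℝ} (hε : ε ≠ 0) (hμ : 0 ≤ μ) (hsum : 0 < μ + Ω ^ 2 / 8)
    {x : E2} (hxD : x ∈ unitDisc) (hx0 : x ≠ 0) : 0 < rhoTF2 ε Ω μ x := by
  have hr : 0 < ‖x‖ ^ 2 := by positivity
  have hr1 : ‖x‖ ^ 2 ≤ 1 := pow_le_one₀ (norm_nonneg x) (mem_closedBall_zero_iff.1 hxD)
  -- on the disc, `μ + (Ω²/4)|x|² ≥ |x|² (μ + Ω²/8)`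
  have hinner : 0 < μ + Ω ^ 2 / 4 * ‖x‖ ^ 2 := by
    nlinarith [mul_pos hr hsum, mul_nonneg (sub_nonneg.2 hr1) hμ, mul_nonneg (sq_nonneg Ω) hr.le]
  rw [rhoTF2, max_eq_left hinner.le]
  positivity

end RhoTF2

theorem le_four_div_sqrt_pi_mul_iff {ε Ω : ℝ} (hε : 0 < ε) (hΩ : 0 ≤ Ω) :
    Ω ≤ 4 / (√π * ε) ↔ π * ε ^ 2 / 2 * (Ω ^ 2 / 8) ≤ 1 := by
  have hsq : (4 / (√π * ε)) ^ 2 = 16 / (π * ε ^ 2) := by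
    rw [div_pow, mul_pow, sq_sqrt pi_nonneg]
    norm_num
  rw [← pow_le_pow_iff_left₀ hΩ (by positivity) two_ne_zero, hsq, le_div_iff₀ (by positivity)]
  constructor <;> intro h <;> linarith

section Normalized

variable {ε Ω μ : ℝ}

theorem eq_of_integral_rhoTF2_eq_one (hμ : ∫ x in unitDisc, rhoTF2 ε Ω μ x = 1) (hε : 0 < ε)
    (hμ0 : 0 ≤ μ) :
    μ = 2 / (π * ε ^ 2) - Ω ^ 2 / 8 := by
  have h := integral_rhoTF2_of_nonneg ε Ω hμ0
  rw [hμ] at h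
  field_simp at h ⊢
  linarith

theorem nonneg_iff_le_four_div_sqrt_pi_mul (hμ : ∫ x in unitDisc, rhoTF2 ε Ω μ x = 1)
    (hε : 0 < ε) (hΩ : 0 ≤ Ω) :
    0 ≤ μ ↔ Ω ≤ 4 / (√π * ε) := by
  rw [le_four_div_sqrt_pi_mul_iff hε hΩ, ← zero_add (Ω ^ 2 / 8),
    ← integral_rhoTF2_of_nonneg ε Ω le_rfl, ← hμ]
  refine ⟨fun hμ0 => ?_, fun hle => ?_⟩
  · exact setIntegral_mono (integrableOn_rhoTF2 ε Ω 0) (integrableOn_rhoTF2 ε Ω μ)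
      (rhoTF2_mono ε Ω hμ0)
  · by_contra! hneg
    exact (integral_rhoTF2_lt ε Ω hneg (hμ ▸ one_pos)).not_ge hle

end Normalized

/-- **Parabolic profile versus 'hole' for the 2D Thomas–Fermi minimizer.**
Let `μ` be the chemical potential normalizing `ρ^TF`. If `Ω ≤ 4/(√π ε)` then
`μ = 2/(π ε²) − Ω²/8 ≥ 0` and `ρ^TF > 0` a.e. on the disc; if `Ω > 4/(√π ε)` then
`μ < 0` and `ρ^TF` vanishes on the open disc of radius `2√(−μ)/Ω` (the density
develops a 'hole'). -/
theorem tf2_minimizer_hole (ε Ω μ : ℝ) (hε : 0 < ε) (hΩ : 0 ≤ Ω)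
    (hμ : (∫ x in unitDisc, rhoTF2 ε Ω μ x) = 1) :
    (Ω ≤ 4 / (Real.sqrt Real.pi * ε) →
      μ = 2 / (Real.pi * ε ^ 2) - Ω ^ 2 / 8 ∧ 0 ≤ μ ∧
      ∀ᵐ x ∂volume.restrict unitDisc, 0 < rhoTF2 ε Ω μ x) ∧
    (4 / (Real.sqrt Real.pi * ε) < Ω →
      μ < 0 ∧ ∀ x : E2, ‖x‖ < 2 * Real.sqrt (-μ) / Ω → rhoTF2 ε Ω μ x = 0) := by
  have hnonneg_iff := nonneg_iff_le_four_div_sqrt_pi_mul hμ hε hΩ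
  refine ⟨fun hle => ?_, fun hlt => ?_⟩
  · have hμ0 := hnonneg_iff.2 hle
    have hformula := eq_of_integral_rhoTF2_eq_one hμ hε hμ0
    have hsum : 0 < μ + Ω ^ 2 / 8 := by
      rw [hformula, sub_add_cancel]
      positivity
    refine ⟨hformula, hμ0, ?_⟩
    filter_upwards [ae_restrict_mem measurableSet_closedBall,
      ae_restrict_of_ae (volume.ae_ne (0 : E2))] with x hxD hx0
    exact rhoTF2_pos_of_mem_unitDisc ε Ω hε.ne' hμ0 hsum hxD hx0
  · have hμ0 : μ < 0 := not_le.1 (hnonneg_iff.not.2 (not_le.2 hlt))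
    exact ⟨hμ0, fun x hx => rhoTF2_eq_zero_of_norm_lt ε Ω hx⟩
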